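/- Let L be a split regular Hom-Lie superalgebra with Z_2-graded root spaces L_{α,ī} := L_α ∩ L_ī. If L_{α,ī} ≠ 0 for α ∈ Λ ∪ {0} and ī ∈ Z_2, then L_{α∘φ^z, ī} ≠ 0 for every integer z. -/

import Mathlib

/-- The super sign `(-1)^{ij}` for `i j : ZMod 2`, valued in a field `K`. -/
def ssign (K : Type*) [Field K] (i j : ZMod 2) : K :=
  if i = 1 ∧ j = 1 then -1 else 1

/-- A split regular Hom-Lie superalgebra over a field `K`:
a `ZMod 2`-graded vector space `L` with a bilinear bracket and an even
automorphism `φ` satisfying skew-supersymmetry and the super Hom-Jacobi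
identity, together with a maximal abelian graded subalgebra `H`
(with respect to which `L` will be split). -/
structure SplitRegularHomLieSuperalgebra (K L : Type*) [Field K]
    [AddCommGroup L] [Module K L] where
  bracket : L →ₗ[K] L →ₗ[K] L
  φ : L ≃ₗ[K] L
  Lg : ZMod 2 → Submodule K L
  grading_sup : Lg 0 ⊔ Lg 1 = ⊤
  grading_disjoint : Lg 0 ⊓ Lg 1 = ⊥
  φ_even : ∀ i, Submodule.map (φ : L →ₗ[K] L) (Lg i) = Lg i
  φ_bracket : ∀ x y, φ (bracket x y) = bracket (φ x) (φ y)
  skew : ∀ (i j : ZMod 2), ∀ x ∈ Lg i, ∀ y ∈ Lg j,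
    bracket x y = -(ssign K i j) • bracket y x
  jacobi : ∀ (i j k : ZMod 2), ∀ x ∈ Lg i, ∀ y ∈ Lg j, ∀ z ∈ Lg k,
    ssign K i k • bracket (bracket x y) (φ z)
      + ssign K i j • bracket (bracket y z) (φ x)
      + ssign K j k • bracket (bracket z x) (φ y) = 0
  H : Submodule K L
  H_graded : H = (H ⊓ Lg 0) ⊔ (H ⊓ Lg 1)
  H_abelian : ∀ x ∈ H, ∀ y ∈ H, bracket x y = 0
  φ_H : Submodule.map (φ : L →ₗ[K] L) H = H
  H_max : ∀ A : Submodule K L, (A = (A ⊓ Lg 0) ⊔ (A ⊓ Lg 1)) →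
    (∀ x ∈ A, ∀ y ∈ A, bracket x y = 0) →
    Submodule.map (φ : L →ₗ[K] L) A = A → H ≤ A → A = H
  /-- the restriction of `φ` to `H₀ = H ⊓ L₀` as a linear automorphism -/
  φH0 : ↥(H ⊓ Lg 0) ≃ₗ[K] ↥(H ⊓ Lg 0)
  φH0_coe : ∀ h : ↥(H ⊓ Lg 0), (φH0 h : L) = φ (h : L)

namespace SplitRegularHomLieSuperalgebra

variable {K L : Type*} [Field K] [AddCommGroup L] [Module K L]
variable (D : SplitRegularHomLieSuperalgebra K L)

/-- The even part `H₀` of `H`. -/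
abbrev H0 : Submodule K L := D.H ⊓ D.Lg 0

/-- The root space associated to a linear functional `α : H₀ → K`. -/
def rootSpace (α : ↥D.H0 →ₗ[K] K) : Submodule K L where
  carrier := {v | ∀ h : ↥D.H0, D.bracket h v = α h • D.φ v}
  add_mem' := by
    intro a b ha hb h
    simp only [map_add, ha h, hb h, smul_add]
  zero_mem' := by
    intro h
    simp
  smul_mem' := by
    intro c x hx h
    simp only [map_smul, hx h, smul_comm c (α h)]

/-- The root system: the set of nonzero functionals with nonzero root space. -/
def Λ : Set (↥D.H0 →ₗ[K] K) := {α | α ≠ 0 ∧ D.rootSpace α ≠ ⊥}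

/-- The twist `α ∘ φ^z` of a functional by an integer power of `φ` (restricted
to `H₀`). -/
def twist (α : ↥D.H0 →ₗ[K] K) (z : ℤ) : ↥D.H0 →ₗ[K] K :=
  α.comp ((D.φH0 ^ z : ↥D.H0 ≃ₗ[K] ↥D.H0) : ↥D.H0 →ₗ[K] ↥D.H0)

/-- The subspace spanned by all brackets `[a,b]` with `a ∈ A`, `b ∈ B`. -/
def bracketSpan (A B : Submodule K L) : Submodule K L :=
  Submodule.span K {z | ∃ a ∈ A, ∃ b ∈ B, z = D.bracket a b}

/-- `±Λ = Λ ∪ (−Λ)`. -/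
def pmΛ : Set (↥D.H0 →ₗ[K] K) := {γ | γ ∈ D.Λ ∨ -γ ∈ D.Λ}

/-- The partial sums appearing in the definition of a connection:
`theta a 0 = a 0` and `theta a (i+1) = (theta a i + a (i+1)) ∘ φ⁻¹`. -/
def theta (a : ℕ → (↥D.H0 →ₗ[K] K)) : ℕ → (↥D.H0 →ₗ[K] K)
  | 0 => a 0
  | i + 1 => D.twist (theta a i + a (i + 1)) (-1)

/-- `α` is connected to `β`. -/
def Connected (α β : ↥D.H0 →ₗ[K] K) : Prop :=
  ∃ (k : ℕ) (a : ℕ → (↥D.H0 →ₗ[K] K)), 1 ≤ k ∧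
    (∀ i < k, a i ∈ D.pmΛ) ∧
    (∃ n : ℕ, a 0 = D.twist α (-(n : ℤ))) ∧
    (∀ i, 1 ≤ i → i + 1 ≤ k - 1 → D.theta a i ∈ D.pmΛ) ∧
    (∃ m : ℕ, D.theta a (k - 1) = D.twist β (-(m : ℤ)) ∨
              D.theta a (k - 1) = -(D.twist β (-(m : ℤ))))

/-- The connection class `[α]` of a root `α`. -/
def rootClass (α : ↥D.H0 →ₗ[K] K) : Set (↥D.H0 →ₗ[K] K) :=
  {β ∈ D.Λ | D.Connected α β}

/-- `H_{[α]} = span {[L_β, L_{−β}] : β ∈ [α]}`. -/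
def Hclass (α : ↥D.H0 →ₗ[K] K) : Submodule K L :=
  ⨆ β ∈ D.rootClass α, D.bracketSpan (D.rootSpace β) (D.rootSpace (-β))

/-- `V_{[α]} = ⊕_{β ∈ [α]} L_β`. -/
def Vclass (α : ↥D.H0 →ₗ[K] K) : Submodule K L :=
  ⨆ β ∈ D.rootClass α, D.rootSpace β

/-- `L_{[α]} = H_{[α]} ⊕ V_{[α]}`. -/
def Lclass (α : ↥D.H0 →ₗ[K] K) : Submodule K L :=
  D.Hclass α ⊔ D.Vclass α

/-- The center `Z(L) = {v : [v, L] = 0}`. -/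
def center : Submodule K L where
  carrier := {v | ∀ y : L, D.bracket v y = 0}
  add_mem' := by
    intro a b ha hb y
    simp only [map_add, LinearMap.add_apply, ha y, hb y, add_zero]
  zero_mem' := by
    intro y
    simp
  smul_mem' := by
    intro c x hx y
    simp only [map_smul, LinearMap.smul_apply, hx y, smul_zero]

/-- An ideal: a graded, `φ`-invariant subspace `I` with `[I,L] ⊆ I`. -/
def IsIdeal (I : Submodule K L) : Prop :=
  (I = (I ⊓ D.Lg 0) ⊔ (I ⊓ D.Lg 1)) ∧
  (∀ x ∈ I, ∀ y : L, D.bracket x y ∈ I) ∧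
  Submodule.map (D.φ : L →ₗ[K] L) I = I

/-- Simplicity: `[L,L] ≠ 0` and the only ideals are `0` and `L`. -/
def IsSimple : Prop :=
  (¬ ∀ x y : L, D.bracket x y = 0) ∧
  ∀ I : Submodule K L, D.IsIdeal I → I = ⊥ ∨ I = ⊤

end SplitRegularHomLieSuperalgebra

/-- The split condition: `L = H ⊕ (⊕_{α ∈ Λ} L_α)` as an internal direct sum. -/
structure IsSplitDecomposition {K L : Type*} [Field K] [AddCommGroup L]
    [Module K L] (D : SplitRegularHomLieSuperalgebra K L) : Prop where
  sup_eq_top : D.H ⊔ (⨆ α ∈ D.Λ, D.rootSpace α) = ⊤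
  disjoint_H : Disjoint D.H (⨆ α ∈ D.Λ, D.rootSpace α)
  disjoint_root : ∀ α ∈ D.Λ, Disjoint (D.rootSpace α)
    (D.H ⊔ ⨆ β ∈ {β ∈ D.Λ | β ≠ α}, D.rootSpace β)

namespace SplitRegularHomLieSuperalgebra

variable {K L : Type*} [Field K] [AddCommGroup L] [Module K L]
variable (D : SplitRegularHomLieSuperalgebra K L)

lemma φ_mem_Lg {i : ZMod 2} {x : L} (hx : x ∈ D.Lg i) : D.φ x ∈ D.Lg i :=
  D.φ_even i ▸ Submodule.mem_map_of_mem hx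

lemma φ_symm_mem_Lg {i : ZMod 2} {x : L} (hx : x ∈ D.Lg i) : D.φ.symm x ∈ D.Lg i :=
  (Submodule.mem_map_equiv _).mp ((D.φ_even i).symm ▸ hx)

lemma φ_symm_bracket (x y : L) :
    D.φ.symm (D.bracket x y) = D.bracket (D.φ.symm x) (D.φ.symm y) := by
  rw [LinearEquiv.symm_apply_eq, D.φ_bracket, LinearEquiv.apply_symm_apply,
    LinearEquiv.apply_symm_apply]

lemma φH0_symm_coe (h : ↥D.H0) : (D.φH0.symm h : L) = D.φ.symm (h : L) := by
  rw [LinearEquiv.eq_symm_apply, ← D.φH0_coe, LinearEquiv.apply_symm_apply]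

lemma twist_zero (α : ↥D.H0 →ₗ[K] K) : D.twist α 0 = α := by
  ext h
  simp [twist]

lemma twist_twist (α : ↥D.H0 →ₗ[K] K) (m n : ℤ) :
    D.twist (D.twist α m) n = D.twist α (m + n) := by
  ext h
  simp [twist, zpow_add]

lemma φ_symm_mem_rootSpace_twist_one {α : ↥D.H0 →ₗ[K] K} {v : L}
    (hv : v ∈ D.rootSpace α) : D.φ.symm v ∈ D.rootSpace (D.twist α 1) := by
  intro h
  calc D.bracket h (D.φ.symm v)
      = D.φ.symm (D.bracket (D.φH0 h) v) := by
        rw [D.φ_symm_bracket, D.φH0_coe, LinearEquiv.symm_apply_apply]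
    _ = D.twist α 1 h • D.φ (D.φ.symm v) := by
        rw [hv, map_smul, LinearEquiv.symm_apply_apply, LinearEquiv.apply_symm_apply]
        simp [twist]

lemma φ_mem_rootSpace_twist_neg_one {α : ↥D.H0 →ₗ[K] K} {v : L}
    (hv : v ∈ D.rootSpace α) : D.φ v ∈ D.rootSpace (D.twist α (-1)) := by
  intro h
  calc D.bracket h (D.φ v)
      = D.φ (D.bracket (D.φH0.symm h) v) := by
        rw [D.φ_bracket, D.φH0_symm_coe, LinearEquiv.apply_symm_apply]
    _ = D.twist α (-1) h • D.φ (D.φ v) := by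
        rw [hv, map_smul]
        simp [twist]

lemma rootSpace_twist_one_inf_Lg_ne_bot {α : ↥D.H0 →ₗ[K] K} {i : ZMod 2}
    (h : D.rootSpace α ⊓ D.Lg i ≠ ⊥) : D.rootSpace (D.twist α 1) ⊓ D.Lg i ≠ ⊥ := by
  obtain ⟨v, ⟨hvα, hvi⟩, hv⟩ := Submodule.ne_bot_iff _ |>.mp h
  exact Submodule.ne_bot_iff _ |>.mpr ⟨D.φ.symm v,
    ⟨D.φ_symm_mem_rootSpace_twist_one hvα, D.φ_symm_mem_Lg hvi⟩, by simpa using hv⟩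

lemma rootSpace_twist_neg_one_inf_Lg_ne_bot {α : ↥D.H0 →ₗ[K] K} {i : ZMod 2}
    (h : D.rootSpace α ⊓ D.Lg i ≠ ⊥) : D.rootSpace (D.twist α (-1)) ⊓ D.Lg i ≠ ⊥ := by
  obtain ⟨v, ⟨hvα, hvi⟩, hv⟩ := Submodule.ne_bot_iff _ |>.mp h
  exact Submodule.ne_bot_iff _ |>.mpr ⟨D.φ v,
    ⟨D.φ_mem_rootSpace_twist_neg_one hvα, D.φ_mem_Lg hvi⟩, by simpa using hv⟩

end SplitRegularHomLieSuperalgebra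

theorem stmt_6_general {K L : Type*} [Field K] [AddCommGroup L] [Module K L]
    (D : SplitRegularHomLieSuperalgebra K L)
    (α : ↥D.H0 →ₗ[K] K) (i : ZMod 2)
    (h : D.rootSpace α ⊓ D.Lg i ≠ ⊥) :
    ∀ z : ℤ, D.rootSpace (D.twist α z) ⊓ D.Lg i ≠ ⊥ := by
  intro z
  induction z using Int.induction_on with
  | zero => rwa [D.twist_zero]
  | succ n ih =>
    rw [← D.twist_twist]
    exact D.rootSpace_twist_one_inf_Lg_ne_bot ih
  | pred n ih =>
    rw [sub_eq_add_neg, ← D.twist_twist]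
    exact D.rootSpace_twist_neg_one_inf_Lg_ne_bot ih

/-- if `L_{α,ī} ≠ 0` then `L_{α∘φ^z, ī} ≠ 0` for every integer `z`. -/
theorem stmt_6 {K L : Type*} [Field K] [AddCommGroup L] [Module K L]
    (D : SplitRegularHomLieSuperalgebra K L) (hsplit : IsSplitDecomposition D)
    (α : ↥D.H0 →ₗ[K] K) (hα : α = 0 ∨ α ∈ D.Λ) (i : ZMod 2)
    (h : D.rootSpace α ⊓ D.Lg i ≠ ⊥) :
    ∀ z : ℤ, D.rootSpace (D.twist α z) ⊓ D.Lg i ≠ ⊥ :=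
  stmt_6_general D α i h
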